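/- There exists c > 0 such that for every finitely supported f : ℕ×V₂ → ℂ: ‖A_{G^f} f‖_{ℓ²(ℕ×V₂, m^f)} ≤ c·‖Λ^f f‖_{ℓ²(ℕ×V₂, m^f)}, where Λ^f is the operator (Λ^f f)(x,y) = (x + 1/2)·f(x,y). -/

import Mathlib

noncomputable section

open Complex

/-- `(A_ℕ f)(n) = (i/2)·((n − 1/2)·f(n−1) − (n + 1/2)·f(n+1))`, with `f(−1) = 0`. -/
def aN (f : ℕ → ℂ) : ℕ → ℂ := fun n =>
  (I / 2) * (((n : ℂ) - 1 / 2) * (if n = 0 then 0 else f (n - 1))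
    - ((n : ℂ) + 1 / 2) * f (n + 1))

/-- The gauge transform `T_{m→m'} f = (x ↦ √(m(x)/m'(x))·f(x))`. -/
def Tw {V : Type*} (m m' : V → ℝ) (f : V → ℂ) : V → ℂ :=
  fun x => (Real.sqrt (m x / m' x) : ℂ) * f x

/-- Weight of the funnel half-line: `m₁^f(n) = eⁿ`. -/
def m1F : ℕ → ℝ := fun n => Real.exp n

/-- `A_{m₁^f} := T_{1→m₁^f} ∘ A_ℕ ∘ T_{1→m₁^f}⁻¹`. -/
def aM1F (f : ℕ → ℂ) : ℕ → ℂ :=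
  Tw (fun _ => 1) m1F (aN (Tw m1F (fun _ => 1) f))

/-- `A_{G^f} := A_{m₁^f} ⊗ 1`. -/
def aGF {V₂ : Type*} (f : ℕ × V₂ → ℂ) : ℕ × V₂ → ℂ := fun v =>
  aM1F (fun n => f (n, v.2)) v.1

/-- Weight of the funnel: `m^f(x,y) = eˣ·m₂`. -/
def mF (V₂ : Type*) (m₂ : ℝ) : ℕ × V₂ → ℝ := fun v => Real.exp v.1 * m₂

/-- The ℓ²-norm with weight `m`. -/
def nrm {V : Type*} (m : V → ℝ) (f : V → ℂ) : ℝ :=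
  Real.sqrt (∑' x : V, m x * ‖f x‖ ^ 2)

/-- `(Λ^f f)(x,y) = (x + 1/2)·f(x,y)`. -/
def lamF {V₂ : Type*} (f : ℕ × V₂ → ℂ) : ℕ × V₂ → ℂ := fun v =>
  ((v.1 : ℂ) + 1 / 2) * f v


/-! Conjugating by `√(eⁿ)` turns `A_{m₁^f}` into `A_ℕ`: with `ψ(n) = e^{n/2} f(n)` one has
`eⁿ ‖A f(n)‖² = ‖A_ℕ ψ(n)‖² ≤ ((n - 1/2)² ‖ψ(n-1)‖² + (n + 1/2)² ‖ψ(n+1)‖²) / 2`.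
The first term is the `Λ`-energy `e^k (k + 1/2)² ‖f(k)‖²` at `k = n - 1`, the second is at most
the one at `k = n + 1`, and summing over `n` each shift contributes at most `‖Λ^f f‖²`;
so `c = 1` works. -/

section ShiftSums

variable {V : Type*}

lemma injective_succ_fst : Function.Injective (fun v : ℕ × V => (v.1 + 1, v.2)) :=
  Nat.succ_injective.prodMap Function.injective_id

lemma Summable.hasSum_ite_pred_fst {G : ℕ × V → ℝ} (hG : Summable G) :
    HasSum (fun v : ℕ × V => if v.1 = 0 then 0 else G (v.1 - 1, v.2)) (∑' v, G v) := by
  have hsupp : ∀ v ∉ Set.range (fun v : ℕ × V => (v.1 + 1, v.2)),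
      (if v.1 = 0 then 0 else G (v.1 - 1, v.2)) = 0 := by
    rintro ⟨_ | n, y⟩ hv
    · simp
    · exact absurd ⟨(n, y), rfl⟩ hv
  rw [← injective_succ_fst.hasSum_iff hsupp]
  simpa [Function.comp_def] using hG.hasSum

theorem tsum_le_of_le_avg_neighbours_fst {F G : ℕ × V → ℝ} (hF : ∀ v, 0 ≤ F v)
    (hG : ∀ v, 0 ≤ G v) (hGs : Summable G)
    (hFG : ∀ v, F v ≤ ((if v.1 = 0 then 0 else G (v.1 - 1, v.2)) + G (v.1 + 1, v.2)) / 2) :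
    ∑' v, F v ≤ ∑' v, G v := by
  have hpred := Summable.hasSum_ite_pred_fst hGs
  have hsucc : Summable fun v : ℕ × V => G (v.1 + 1, v.2) := hGs.comp_injective injective_succ_fst
  have hsum := (hpred.add hsucc.hasSum).div_const 2
  calc ∑' v, F v ≤ (∑' v, G v + ∑' v : ℕ × V, G (v.1 + 1, v.2)) / 2 :=
        hasSum_le hFG (Summable.of_nonneg_of_le hF hFG hsum.summable).hasSum hsum
    _ ≤ ∑' v, G v := by
        have := tsum_comp_le_tsum_of_inj hGs hG injective_succ_fst
        rw [Function.comp_def] at this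
        linarith

end ShiftSums

lemma norm_Tw_sq {V : Type*} (m m' : V → ℝ) (f : V → ℂ) (x : V) (h : 0 ≤ m x / m' x) :
    ‖Tw m m' f x‖ ^ 2 = m x / m' x * ‖f x‖ ^ 2 := by
  rw [Tw, norm_mul, mul_pow, Complex.norm_real, Real.norm_eq_abs, sq_abs, Real.sq_sqrt h]

lemma norm_natCast_add_half (n : ℕ) : ‖(n : ℂ) + 1 / 2‖ = n + 1 / 2 := by
  rw [show (n : ℂ) + 1 / 2 = ((n + 1 / 2 : ℝ) : ℂ) by push_cast; rfl,
    Complex.norm_of_nonneg (by positivity)]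

lemma norm_aN_sq_le (h : ℕ → ℂ) (n : ℕ) :
    ‖aN h n‖ ^ 2 ≤ ((if n = 0 then 0 else ‖((n : ℂ) - 1 / 2) * h (n - 1)‖ ^ 2)
      + ‖((n : ℂ) + 1 / 2) * h (n + 1)‖ ^ 2) / 2 := by
  set a := ((n : ℂ) - 1 / 2) * (if n = 0 then 0 else h (n - 1))
  set b := ((n : ℂ) + 1 / 2) * h (n + 1)
  have ha : ‖a‖ ^ 2 = if n = 0 then 0 else ‖((n : ℂ) - 1 / 2) * h (n - 1)‖ ^ 2 := by
    split_ifs <;> simp [a, *]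
  calc ‖aN h n‖ ^ 2 = ‖a - b‖ ^ 2 / 4 := by
        rw [aN, norm_mul, mul_pow, norm_div, Complex.norm_I, Complex.norm_two]; ring
    _ ≤ (‖a‖ + ‖b‖) ^ 2 / 4 := by gcongr; exact norm_sub_le a b
    _ ≤ _ := by rw [← ha]; linarith [add_sq_le (a := ‖a‖) (b := ‖b‖)]

lemma exp_mul_norm_aGF_sq_le {V₂ : Type*} (f : ℕ × V₂ → ℂ) (n : ℕ) (y : V₂) :
    Real.exp n * ‖aGF f (n, y)‖ ^ 2 ≤
      ((if n = 0 then 0 else Real.exp ↑(n - 1) * ‖lamF f (n - 1, y)‖ ^ 2)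
        + Real.exp ↑(n + 1) * ‖lamF f (n + 1, y)‖ ^ 2) / 2 := by
  set ψ := Tw m1F (fun _ => 1) (fun k => f (k, y))
  have hψ : ∀ k, ‖ψ k‖ ^ 2 = Real.exp k * ‖f (k, y)‖ ^ 2 := fun k => by
    rw [norm_Tw_sq _ _ _ _ (by simp [m1F, (Real.exp_pos _).le]), m1F, div_one]
  have hgauge : Real.exp n * ‖aGF f (n, y)‖ ^ 2 = ‖aN ψ n‖ ^ 2 := by
    rw [aGF, aM1F, norm_Tw_sq _ _ _ _ (by simp [m1F, (Real.exp_pos _).le]), m1F]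
    field_simp
    rfl
  rw [hgauge]
  refine (norm_aN_sq_le ψ n).trans ?_
  gcongr (?_ + ?_) / 2
  · split_ifs with hn
    · rfl
    · have hcast : (n : ℂ) - 1 / 2 = ((n - 1 : ℕ) : ℂ) + 1 / 2 := by
        rw [Nat.cast_sub (Nat.one_le_iff_ne_zero.mpr hn)]; push_cast; ring
      rw [lamF, norm_mul, mul_pow, hψ, norm_mul, mul_pow, hcast]
      exact (mul_left_comm _ _ _).le
  · rw [lamF, norm_mul, mul_pow, hψ, norm_mul, mul_pow, norm_natCast_add_half,
      norm_natCast_add_half, mul_left_comm]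
    gcongr
    push_cast
    linarith

lemma nrm_mF {V₂ : Type*} (m₂ : ℝ) (g : ℕ × V₂ → ℂ) :
    nrm (mF V₂ m₂) g = √(m₂ * ∑' v : ℕ × V₂, Real.exp v.1 * ‖g v‖ ^ 2) := by
  rw [nrm, ← tsum_mul_left]
  congr! 3 with v
  rw [mF]
  ring

theorem stmt15_general {V₂ : Type*} (m₂ : ℝ) (hm₂ : 0 < m₂) :
    ∃ c > 0, ∀ f : ℕ × V₂ → ℂ, (Function.support f).Finite →
      nrm (mF V₂ m₂) (aGF f) ≤ c * nrm (mF V₂ m₂) (lamF f) := by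
  refine ⟨1, one_pos, fun f hf => ?_⟩
  have hsupp : (Function.support fun v => Real.exp v.1 * ‖lamF f v‖ ^ 2).Finite :=
    hf.subset <| Function.support_subset_iff'.2 fun v hv => by
      simp [lamF, Function.notMem_support.1 hv]
  rw [one_mul, nrm_mF, nrm_mF]
  refine Real.sqrt_le_sqrt (mul_le_mul_of_nonneg_left ?_ hm₂.le)
  exact tsum_le_of_le_avg_neighbours_fst (fun _ => by positivity) (fun _ => by positivity)
    (summable_of_hasFiniteSupport hsupp) fun v => exp_mul_norm_aGF_sq_le f v.1 v.2

/-- **Bound `‖A_{G^f} f‖ ≤ c·‖Λ^f f‖` on `ℓ²(ℕ×V₂, m^f)` for finitely supported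
functions.** -/
theorem stmt15 {V₂ : Type*} [Fintype V₂] (m₂ : ℝ) (hm₂ : 0 < m₂) :
    ∃ c > 0, ∀ f : ℕ × V₂ → ℂ, (Function.support f).Finite →
      nrm (mF V₂ m₂) (aGF f) ≤ c * nrm (mF V₂ m₂) (lamF f) :=
  stmt15_general m₂ hm₂
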